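/- With the notation of the previous statement (f offspring pgf with p_0 > 0, μ_f ≤ 1, G the total progeny pgf satisfying G(s) = s f(G(s)), I_f and I_G the Legendre transforms of log f(e^·) and log G(e^·)): for all x ∈ [0,1), I_f(x) = (1 − x) · I_G(1/(1 − x)). -/

import Mathlib

open scoped ENNReal
open Real

/-- The probability generating function of a distribution `p` on ℕ, evaluated in `ℝ≥0∞`. -/
noncomputable def pgf (p : ℕ → ℝ≥0∞) (x : ℝ≥0∞) : ℝ≥0∞ := ∑' h : ℕ, x ^ h * p h

/-- The Cramér rate function of the law `p` on ℕ:
`I_p(x) = sup_{α ∈ ℝ} {α x - log (∑_h e^{α h} p_h)}`, with values in `[0, ∞]` inside `EReal`. -/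
noncomputable def cramerRate (p : ℕ → ℝ≥0∞) (x : ℝ) : EReal :=
  ⨆ α : ℝ, (((α * x : ℝ) : EReal) - ENNReal.log (pgf p (ENNReal.ofReal (Real.exp α))))

/-!
Write `f = pgf p` and `G = pgf q`. Comparing coefficients of power series with nonnegative
coefficients on `(0, 1]` shows that `q` is the coefficient sequence of `s ↦ s f(G(s))`. Hence the
functional equation holds on all of `[0, ∞]`, and `G(s)` is the least `t` with `s f(t) ≤ t`, since
by induction every truncation of `G` stays below such a `t`. The identity is then a change of
variables between the two suprema: `α = log G(e^β)` turns `β / (1 - x) - log G(e^β)` into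
`(α x - log f(e^α)) / (1 - x)`, and conversely `β = α - log f(e^α)` satisfies `G(e^β) ≤ e^α` by
minimality.
-/

open Filter Topology PowerSeries

open Finset in
theorem ENNReal.tsum_mul_tsum_eq_tsum_sum_antidiagonal (f g : ℕ → ℝ≥0∞) :
    (∑' n, f n) * ∑' n, g n = ∑' n, ∑ kl ∈ antidiagonal n, f kl.1 * g kl.2 := by
  rw [← ENNReal.tsum_mul_right]
  simp_rw [← ENNReal.tsum_mul_left]
  rw [← ENNReal.tsum_prod (f := fun k l => f k * g l),
    ← HasAntidiagonal.sigmaAntidiagonalEquivProd.tsum_eq, ENNReal.tsum_sigma']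
  refine tsum_congr fun n => ?_
  rw [tsum_fintype]
  exact Finset.sum_coe_sort (antidiagonal n) fun kl => f kl.1 * g kl.2

theorem pgf_mono (p : ℕ → ℝ≥0∞) : Monotone (pgf p) := fun _ _ h =>
  ENNReal.tsum_le_tsum fun k => by gcongr

theorem pgf_le_pgf_of_le {a b : ℕ → ℝ≥0∞} (h : a ≤ b) (s : ℝ≥0∞) : pgf a s ≤ pgf b s :=
  ENNReal.tsum_le_tsum fun k => by gcongr; exact h k

theorem apply_zero_le_pgf (a : ℕ → ℝ≥0∞) (s : ℝ≥0∞) : a 0 ≤ pgf a s := by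
  simpa [pgf] using ENNReal.le_tsum (f := fun k => s ^ k * a k) 0

theorem pgf_eq_add_mul_pgf_succ (a : ℕ → ℝ≥0∞) (s : ℝ≥0∞) :
    pgf a s = a 0 + s * pgf (fun k => a (k + 1)) s := by
  rw [pgf, tsum_eq_zero_add' ENNReal.summable, pgf, ← ENNReal.tsum_mul_left]
  simp only [pow_zero, one_mul, pow_succ', mul_assoc]

theorem pgf_succ_le_pgf (a : ℕ → ℝ≥0∞) : pgf (fun k => a (k + 1)) 1 ≤ pgf a 1 := by
  rw [pgf_eq_add_mul_pgf_succ a 1, one_mul]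
  exact le_add_self

theorem apply_zero_le_of_pgf_le {a b : ℕ → ℝ≥0∞} (hb : pgf b 1 ≠ ⊤)
    (h : ∀ s, 0 < s → s ≤ 1 → pgf a s ≤ pgf b s) : a 0 ≤ b 0 := by
  set B := pgf (fun k => b (k + 1)) 1
  have hB : B ≠ ⊤ := ne_top_of_le_ne_top hb (pgf_succ_le_pgf b)
  have hlim : Tendsto (fun s => b 0 + s * B) (𝓝[>] 0) (𝓝 (b 0)) :=
    ((continuous_const.add (ENNReal.continuous_mul_const hB)).tendsto'
      (f := fun s => b 0 + s * B) 0 (b 0) (by simp)).mono_left nhdsWithin_le_nhds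
  refine ge_of_tendsto hlim ?_
  filter_upwards [Ioo_mem_nhdsGT zero_lt_one] with s ⟨hs0, hs1⟩
  calc a 0 ≤ pgf a s := apply_zero_le_pgf a s
    _ ≤ pgf b s := h s hs0 hs1.le
    _ = b 0 + s * pgf (fun k => b (k + 1)) s := pgf_eq_add_mul_pgf_succ b s
    _ ≤ b 0 + s * B := by gcongr; exact pgf_mono _ hs1.le

theorem apply_zero_eq_of_pgf_eq {a b : ℕ → ℝ≥0∞} (ha : pgf a 1 ≠ ⊤) (hb : pgf b 1 ≠ ⊤)
    (h : ∀ s, 0 < s → s ≤ 1 → pgf a s = pgf b s) : a 0 = b 0 :=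
  le_antisymm (apply_zero_le_of_pgf_le hb fun s hs hs1 => (h s hs hs1).le)
    (apply_zero_le_of_pgf_le ha fun s hs hs1 => (h s hs hs1).ge)

theorem eq_of_pgf_eq {a b : ℕ → ℝ≥0∞} (ha : pgf a 1 ≠ ⊤) (hb : pgf b 1 ≠ ⊤)
    (h : ∀ s, 0 < s → s ≤ 1 → pgf a s = pgf b s) : a = b := by
  funext n
  induction n generalizing a b with
  | zero => exact apply_zero_eq_of_pgf_eq ha hb h
  | succ n ih =>
    have h0 := apply_zero_eq_of_pgf_eq ha hb h
    have ha0 : a 0 ≠ ⊤ := ne_top_of_le_ne_top ha (apply_zero_le_pgf a 1)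
    refine ih (ne_top_of_le_ne_top ha (pgf_succ_le_pgf a))
      (ne_top_of_le_ne_top hb (pgf_succ_le_pgf b)) fun s hs hs1 => ?_
    have := h s hs hs1
    rw [pgf_eq_add_mul_pgf_succ a, pgf_eq_add_mul_pgf_succ b, h0,
      ENNReal.add_right_inj (h0 ▸ ha0)] at this
    exact (ENNReal.mul_right_inj hs.ne' (ne_top_of_le_ne_top ENNReal.one_ne_top hs1)).mp this

theorem pgf_coeff_mul (φ ψ : ℝ≥0∞⟦X⟧) (s : ℝ≥0∞) :
    pgf (coeff · (φ * ψ)) s = pgf (coeff · φ) s * pgf (coeff · ψ) s := by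
  rw [pgf, pgf, pgf, ENNReal.tsum_mul_tsum_eq_tsum_sum_antidiagonal]
  refine tsum_congr fun n => ?_
  rw [coeff_mul, Finset.mul_sum]
  refine Finset.sum_congr rfl fun kl hkl => ?_
  rw [← Finset.HasAntidiagonal.mem_antidiagonal.mp hkl, pow_add]
  ring

theorem pgf_coeff_one (s : ℝ≥0∞) : pgf (coeff · (1 : ℝ≥0∞⟦X⟧)) s = 1 := by
  rw [pgf, tsum_eq_single 0 fun k hk => by simp [coeff_one, hk]]
  simp

theorem pgf_coeff_pow (φ : ℝ≥0∞⟦X⟧) (n : ℕ) (s : ℝ≥0∞) :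
    pgf (coeff · (φ ^ n)) s = pgf (coeff · φ) s ^ n := by
  induction n with
  | zero => simp only [pow_zero, pgf_coeff_one]
  | succ n ih => rw [pow_succ, pgf_coeff_mul, ih, pow_succ]

theorem pgf_coeff_mk (q : ℕ → ℝ≥0∞) (s : ℝ≥0∞) : pgf (coeff · (mk q)) s = pgf q s := by
  simp only [coeff_mk]

theorem pgf_coeff_X_mul (φ : ℝ≥0∞⟦X⟧) (s : ℝ≥0∞) :
    pgf (coeff · (X * φ)) s = s * pgf (coeff · φ) s := by
  rw [pgf_eq_add_mul_pgf_succ]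
  simp only [coeff_zero_X_mul, coeff_succ_X_mul, zero_add]

noncomputable def compCoeff (p : ℕ → ℝ≥0∞) (φ : ℝ≥0∞⟦X⟧) (k : ℕ) : ℝ≥0∞ :=
  ∑' h, p h * coeff k (φ ^ h)

theorem pgf_pgf_coeff (p : ℕ → ℝ≥0∞) (φ : ℝ≥0∞⟦X⟧) (s : ℝ≥0∞) :
    pgf p (pgf (coeff · φ) s) = pgf (compCoeff p φ) s := by
  rw [pgf]
  simp_rw [← pgf_coeff_pow, pgf, compCoeff, ← ENNReal.tsum_mul_right, ← ENNReal.tsum_mul_left]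
  rw [ENNReal.tsum_comm]
  exact tsum_congr fun k => tsum_congr fun h => by ring

theorem compCoeff_trunc (p : ℕ → ℝ≥0∞) (φ : ℝ≥0∞⟦X⟧) {k n : ℕ} (hk : k < n) :
    compCoeff p (trunc n φ) k = compCoeff p φ k := by
  refine tsum_congr fun h => ?_
  rw [← coeff_coe_trunc_of_lt hk, trunc_trunc_pow, coeff_coe_trunc_of_lt hk]

theorem pgf_coeff_eq_iSup_trunc (φ : ℝ≥0∞⟦X⟧) (s : ℝ≥0∞) :
    pgf (coeff · φ) s = ⨆ n, pgf (coeff · (trunc n φ : ℝ≥0∞⟦X⟧)) s := by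
  rw [pgf, ENNReal.tsum_eq_iSup_nat]
  congr! 2 with n
  rw [pgf, tsum_eq_sum (s := Finset.range n) fun k hk => by simp_all [coeff_trunc]]
  exact Finset.sum_congr rfl fun k hk => by simp_all [coeff_trunc]

section Progeny

variable {p q : ℕ → ℝ≥0∞}

theorem mk_eq_X_mul_mk_compCoeff (hq : pgf q 1 ≠ ⊤)
    (hfe : ∀ s : ℝ≥0∞, s ≤ 1 → pgf q s = s * pgf p (pgf q s)) :
    mk q = X * mk (compCoeff p (mk q)) := by
  set φ := X * mk (compCoeff p (mk q))
  have hφ (s : ℝ≥0∞) : pgf (coeff · φ) s = s * pgf p (pgf q s) := by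
    rw [pgf_coeff_X_mul, pgf_coeff_mk, ← pgf_pgf_coeff, pgf_coeff_mk]
  have hqφ : q = (coeff · φ) :=
    eq_of_pgf_eq hq (by rwa [hφ, ← hfe 1 le_rfl]) fun s _ hs1 => by rw [hφ, ← hfe s hs1]
  ext n
  rw [coeff_mk]
  exact congrFun hqφ n

theorem pgf_eq_mul_pgf_pgf (hq : mk q = X * mk (compCoeff p (mk q))) (s : ℝ≥0∞) :
    pgf q s = s * pgf p (pgf q s) := by
  conv_lhs => rw [← pgf_coeff_mk, hq]
  rw [pgf_coeff_X_mul, pgf_coeff_mk, ← pgf_pgf_coeff, pgf_coeff_mk]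

theorem pgf_le_of_mul_pgf_le (hq : mk q = X * mk (compCoeff p (mk q))) {s t : ℝ≥0∞}
    (h : s * pgf p t ≤ t) : pgf q s ≤ t := by
  have hq0 : q 0 = 0 := by rw [← coeff_mk 0 q, hq, coeff_zero_X_mul]
  have hsucc (k : ℕ) : q (k + 1) = compCoeff p (mk q) k := by
    conv_lhs => rw [← coeff_mk (k + 1) q, hq, coeff_succ_X_mul, coeff_mk]
  rw [← pgf_coeff_mk, pgf_coeff_eq_iSup_trunc]
  refine iSup_le fun n => ?_
  induction n with
  | zero => simp [pgf]
  | succ n ih =>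
    have hcoeff : (fun k => coeff (k + 1) (trunc (n + 1) (mk q) : ℝ≥0∞⟦X⟧))
        ≤ compCoeff p (trunc n (mk q)) := by
      intro k
      dsimp only
      rw [Polynomial.coeff_coe, coeff_trunc, coeff_mk]
      split_ifs with hk
      · rw [hsucc, compCoeff_trunc p _ (by omega)]
      · exact zero_le
    calc pgf (coeff · (trunc (n + 1) (mk q) : ℝ≥0∞⟦X⟧)) s
        = s * pgf (fun k => coeff (k + 1) (trunc (n + 1) (mk q) : ℝ≥0∞⟦X⟧)) s := by
          rw [pgf_eq_add_mul_pgf_succ, Polynomial.coeff_coe, coeff_trunc, if_pos n.succ_pos,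
            coeff_mk, hq0, zero_add]
      _ ≤ s * pgf (compCoeff p (trunc n (mk q))) s := by gcongr; exact pgf_le_pgf_of_le hcoeff s
      _ = s * pgf p (pgf (coeff · (trunc n (mk q) : ℝ≥0∞⟦X⟧)) s) := by rw [pgf_pgf_coeff]
      _ ≤ s * pgf p t := by gcongr; exact pgf_mono p ih
      _ ≤ t := h

end Progeny

noncomputable def legendreLogExp (F : ℝ≥0∞ → ℝ≥0∞) (x : ℝ) : EReal :=
  ⨆ α : ℝ, ((α * x : ℝ) : EReal) - ENNReal.log (F (ENNReal.ofReal (Real.exp α)))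

section Legendre

variable {F G : ℝ≥0∞ → ℝ≥0∞} {x : ℝ}

theorem legendreLogExp_le_one_sub_mul (hF : ∀ t, F t ≠ 0)
    (hGle : ∀ s t, s * F t ≤ t → G s ≤ t) (hx : x < 1) :
    legendreLogExp F x ≤ ((1 - x : ℝ) : EReal) * legendreLogExp G (1 / (1 - x)) := by
  refine iSup_le fun α => ?_
  set t := ENNReal.ofReal (exp α)
  rcases eq_or_ne (F t) ⊤ with hFt | hFt
  · simp [hFt]
  obtain ⟨l, hl⟩ : ∃ l : ℝ, ENNReal.log (F t) = l := ⟨_, ENNReal.log_pos_real (hF t) hFt⟩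
  set β := α - l
  have hGβ : G (ENNReal.ofReal (exp β)) ≤ t := by
    refine hGle _ _ (le_of_eq ?_)
    rw [← ENNReal.exp_log (F t), hl, EReal.exp_coe, ← ENNReal.ofReal_mul (exp_pos β).le,
      ← exp_add, sub_add_cancel]
  have hlogG : ENNReal.log (G (ENNReal.ofReal (exp β))) ≤ α :=
    (ENNReal.log_le_log hGβ).trans_eq (EReal.log_exp α)
  calc ((α * x : ℝ) : EReal) - ENNReal.log (F t)
      = ((1 - x : ℝ) : EReal) * (((β * (1 / (1 - x)) : ℝ) : EReal) - α) := by
        rw [hl]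
        norm_cast
        field_simp [(sub_pos.mpr hx).ne']
        ring
    _ ≤ ((1 - x : ℝ) : EReal) * (((β * (1 / (1 - x)) : ℝ) : EReal)
          - ENNReal.log (G (ENNReal.ofReal (exp β)))) := by
        gcongr
        exact EReal.sub_le_sub le_rfl hlogG
    _ ≤ ((1 - x : ℝ) : EReal) * legendreLogExp G (1 / (1 - x)) := by
        gcongr
        exact le_iSup (fun β : ℝ => ((β * (1 / (1 - x)) : ℝ) : EReal)
          - ENNReal.log (G (ENNReal.ofReal (exp β)))) β

theorem legendreLogExp_one_div_one_sub_le (hF : ∀ t, F t ≠ 0)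
    (hG : ∀ s, G s = s * F (G s)) (hx : x < 1) :
    legendreLogExp G (1 / (1 - x)) ≤ ((1 / (1 - x) : ℝ) : EReal) * legendreLogExp F x := by
  refine iSup_le fun β => ?_
  set s := ENNReal.ofReal (exp β)
  have hs : s ≠ 0 := ENNReal.ofReal_ne_zero_iff.mpr (exp_pos β)
  rcases eq_or_ne (G s) ⊤ with hGs | hGs
  · simp [hGs]
  have hFG : F (G s) ≠ ⊤ := fun h => hGs (by rw [hG s, h, ENNReal.mul_top hs])
  have hGs0 : G s ≠ 0 := by rw [hG s]; exact mul_ne_zero hs (hF _)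
  obtain ⟨α, hα⟩ : ∃ α : ℝ, ENNReal.log (G s) = α := ⟨_, ENNReal.log_pos_real hGs0 hGs⟩
  obtain ⟨l, hl⟩ : ∃ l : ℝ, ENNReal.log (F (G s)) = l := ⟨_, ENNReal.log_pos_real (hF _) hFG⟩
  have hαβ : α = β + l := by
    have := congrArg ENNReal.log (hG s)
    rw [ENNReal.log_mul_add, hα, hl, show ENNReal.log s = β from EReal.log_exp β] at this
    exact_mod_cast this
  have hexp : ENNReal.ofReal (exp α) = G s := by
    rw [← EReal.exp_coe, ← hα, ENNReal.exp_log]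
  calc ((β * (1 / (1 - x)) : ℝ) : EReal) - ENNReal.log (G s)
      = ((1 / (1 - x) : ℝ) : EReal) * (((α * x : ℝ) : EReal) - l) := by
        rw [hα]
        norm_cast
        field_simp [(sub_pos.mpr hx).ne']
        rw [hαβ]
        ring
    _ = ((1 / (1 - x) : ℝ) : EReal) * (((α * x : ℝ) : EReal)
          - ENNReal.log (F (ENNReal.ofReal (exp α)))) := by rw [hexp, hl]
    _ ≤ ((1 / (1 - x) : ℝ) : EReal) * legendreLogExp F x := by
        gcongr
        exact le_iSup (fun α : ℝ => ((α * x : ℝ) : EReal)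
          - ENNReal.log (F (ENNReal.ofReal (exp α)))) α

theorem legendreLogExp_eq_one_sub_mul (hF : ∀ t, F t ≠ 0) (hG : ∀ s, G s = s * F (G s))
    (hGle : ∀ s t, s * F t ≤ t → G s ≤ t) (hx : x < 1) :
    legendreLogExp F x = ((1 - x : ℝ) : EReal) * legendreLogExp G (1 / (1 - x)) := by
  refine le_antisymm (legendreLogExp_le_one_sub_mul hF hGle hx) ?_
  calc ((1 - x : ℝ) : EReal) * legendreLogExp G (1 / (1 - x))
      ≤ ((1 - x : ℝ) : EReal) * (((1 / (1 - x) : ℝ) : EReal) * legendreLogExp F x) := by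
        gcongr
        exact legendreLogExp_one_div_one_sub_le hF hG hx
    _ = legendreLogExp F x := by
        rw [← mul_assoc, ← EReal.coe_mul, mul_one_div_cancel (sub_pos.mpr hx).ne', EReal.coe_one,
          one_mul]

end Legendre

theorem cramerRate_offspring_eq_general
    (p q : ℕ → ℝ≥0∞) (hq : ∑' k : ℕ, q k = 1)
    (h0 : 0 < p 0)
    (hfe : ∀ s : ℝ≥0∞, s ≤ 1 → pgf q s = s * pgf p (pgf q s)) :
    ∀ x : ℝ, 0 ≤ x → x < 1 →
      cramerRate p x = ((1 - x : ℝ) : EReal) * cramerRate q (1 / (1 - x)) := by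
  intro x _ hx
  have hrec : mk q = X * mk (compCoeff p (mk q)) :=
    mk_eq_X_mul_mk_compCoeff (by simpa [pgf] using hq.trans_ne ENNReal.one_ne_top) hfe
  exact legendreLogExp_eq_one_sub_mul (fun t => (h0.trans_le (apply_zero_le_pgf p t)).ne')
    (pgf_eq_mul_pgf_pgf hrec) (fun _ _ => pgf_le_of_mul_pgf_le hrec) hx

/-- If `p` is an offspring pmf with `p 0 > 0` and mean `≤ 1`, and `q` is the pmf of the
total progeny of the associated Galton--Watson process with unit initial population
(characterized by the pgf functional equation `G(s) = s f(G(s))` on `[0,1]`), then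
`I_f(x) = (1 - x) ⬝ I_G(1/(1-x))` for all `x ∈ [0,1)`. -/
theorem cramerRate_offspring_eq
    (p q : ℕ → ℝ≥0∞) (hp : ∑' h : ℕ, p h = 1) (hq : ∑' k : ℕ, q k = 1)
    (h0 : 0 < p 0) (hmean : ∑' h : ℕ, (h : ℝ≥0∞) * p h ≤ 1)
    (hfe : ∀ s : ℝ≥0∞, s ≤ 1 → pgf q s = s * pgf p (pgf q s)) :
    ∀ x : ℝ, 0 ≤ x → x < 1 →
      cramerRate p x = ((1 - x : ℝ) : EReal) * cramerRate q (1 / (1 - x)) :=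
  cramerRate_offspring_eq_general p q hq h0 hfe
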